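/- (Proposition 1, monotonicity form) Let X be a real random variable with finite fourth moment, variance σ²(X) > 0, and strictly positive excess kurtosis κ(X) > 0. For σ > 0 let N_σ be independent of X with Gaussian law N(0, σ²) and set Y_σ = X + N_σ. Then the excess kurtosis of the noisy observation is strictly monotone in the noise level: for 0 < σ₁ < σ₂ one has 0 < κ(Y_{σ₂}) < κ(Y_{σ₁}) < κ(X). Equivalently, κ(Y_σ) = κ(X)·(1 − 1/SNR(Y_σ))² is strictly increasing in the signal-to-noise ratio SNR(Y_σ) = σ²(Y_σ)/σ², so higher projection kurtosis of the noisy variable corresponds to higher SNR. -/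

import Mathlib

open MeasureTheory ProbabilityTheory

noncomputable def kurtRV {Ω : Type*} [MeasurableSpace Ω] (X : Ω → ℝ) (P : Measure Ω) : ℝ :=
  centralMoment X 4 P / (variance X P) ^ 2 - 3

/-!
The fourth cumulant `μ₄ - 3σ⁴` is additive over independent summands (expand `(X + Y)⁴` after
centring; every term with a first power of a centred variable integrates to zero) and vanishes for
a Gaussian. Hence `κ(X + N) = κ(X) · (σ²(X) / (σ²(X) + σ²))²`, which decreases strictly in `σ`.

The Gaussian fourth moment needs no integration: for independent `G, G' ~ N(0, v)` the sum
`G + G'` has the law of `√2 G`, so `4 μ₄ = μ₄(G + G') = 2 μ₄ + 6 v²`, i.e. `μ₄ = 3 v²`.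
-/

open scoped NNReal

section Moments

variable {Ω : Type*} [MeasurableSpace Ω] {P : Measure Ω} {X Y : Ω → ℝ}

lemma centralMoment_id_map (hX : AEMeasurable X P) (p : ℕ) :
    centralMoment id p (P.map X) = centralMoment X p P := by
  have hmean : ∫ x, x ∂P.map X = ∫ ω, X ω ∂P := integral_map hX aestronglyMeasurable_id
  simp only [centralMoment, Pi.pow_apply, Pi.sub_apply, id_eq, hmean]
  exact integral_map hX (by fun_prop)

lemma ProbabilityTheory.HasLaw.centralMoment_eq {μ : Measure ℝ} (hX : HasLaw X μ P) (p : ℕ) :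
    centralMoment X p P = centralMoment id p μ := by
  rw [← hX.map_eq, centralMoment_id_map hX.aemeasurable]

lemma centralMoment_const_mul (c : ℝ) (p : ℕ) :
    centralMoment (fun ω ↦ c * X ω) p P = c ^ p * centralMoment X p P := by
  simp only [centralMoment, Pi.pow_apply, Pi.sub_apply, integral_const_mul, ← mul_sub, mul_pow]

lemma MeasureTheory.MemLp.integrable_pow [IsFiniteMeasure P] {n m : ℕ} (hX : MemLp X n P)
    (hm : m ≤ n) : Integrable (X ^ m) P := by
  refine ((hX.mono_exponent (by exact_mod_cast hm)).integrable_norm_pow').mono' ?_ ?_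
  · exact (hX.aestronglyMeasurable.aemeasurable.pow_const m).aestronglyMeasurable
  · filter_upwards with ω using by simp [norm_pow]

lemma ProbabilityTheory.IndepFun.integral_add_pow [IsProbabilityMeasure P] {n : ℕ}
    (hX : MemLp X n P) (hY : MemLp Y n P) (hXY : IndepFun X Y P) :
    ∫ ω, (X ω + Y ω) ^ n ∂P =
      ∑ m ∈ Finset.range (n + 1), (∫ ω, X ω ^ m ∂P) * (∫ ω, Y ω ^ (n - m) ∂P) * n.choose m := by
  have hpow (m k : ℕ) : IndepFun (X ^ m) (Y ^ k) P :=
    hXY.comp (measurable_id.pow_const m) (measurable_id.pow_const k)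
  simp_rw [add_pow]
  rw [integral_finsetSum]
  · refine Finset.sum_congr rfl fun m hm ↦ ?_
    rw [integral_mul_const]
    congr 1
    exact (hpow m (n - m)).integral_fun_mul_eq_mul_integral
      (hX.integrable_pow (Finset.mem_range_succ_iff.mp hm)).aestronglyMeasurable
      (hY.integrable_pow (Nat.sub_le n m)).aestronglyMeasurable
  · intro m hm
    exact ((hpow m (n - m)).integrable_mul (hX.integrable_pow (Finset.mem_range_succ_iff.mp hm))
      (hY.integrable_pow (Nat.sub_le n m))).mul_const _

lemma ProbabilityTheory.IndepFun.centralMoment_four_add [IsProbabilityMeasure P]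
    (hX : MemLp X 4 P) (hY : MemLp Y 4 P) (hXY : IndepFun X Y P) :
    centralMoment (X + Y) 4 P =
      centralMoment X 4 P + 6 * variance X P * variance Y P + centralMoment Y 4 P := by
  set X' := fun ω ↦ X ω - P[X]
  set Y' := fun ω ↦ Y ω - P[Y]
  have hX' : MemLp X' 4 P := hX.sub (memLp_const _)
  have hY' : MemLp Y' 4 P := hY.sub (memLp_const _)
  have hX'0 : ∫ ω, X' ω ∂P = 0 := by
    simp [X', integral_sub (hX.integrable (by norm_num)) (integrable_const _)]
  have hY'0 : ∫ ω, Y' ω ∂P = 0 := by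
    simp [Y', integral_sub (hY.integrable (by norm_num)) (integrable_const _)]
  have hsum : centralMoment (X + Y) 4 P = ∫ ω, (X' ω + Y' ω) ^ 4 ∂P := by
    simp only [centralMoment, Pi.pow_apply, Pi.sub_apply, Pi.add_apply,
      integral_add (hX.integrable (by norm_num)) (hY.integrable (by norm_num))]
    congr 1
    funext ω
    ring
  have hX'2 : variance X P = ∫ ω, X' ω ^ 2 ∂P := variance_eq_integral hX.aemeasurable
  have hY'2 : variance Y P = ∫ ω, Y' ω ^ 2 ∂P := variance_eq_integral hY.aemeasurable
  have hX'4 : centralMoment X 4 P = ∫ ω, X' ω ^ 4 ∂P := rfl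
  have hY'4 : centralMoment Y 4 P = ∫ ω, Y' ω ^ 4 ∂P := rfl
  rw [hsum, (hXY.comp (measurable_id.sub_const _) (measurable_id.sub_const _)).integral_add_pow
    hX' hY', hX'2, hY'2, hX'4, hY'4]
  norm_num [Finset.sum_range_succ, hX'0, hY'0, Nat.choose]
  ring

end Moments

lemma gaussianReal_add_self_eq_map_sqrt_two_mul (v : ℝ≥0) :
    gaussianReal 0 (v + v) = (gaussianReal 0 v).map (√2 * ·) := by
  rw [gaussianReal_map_const_mul, mul_zero]
  congr 1
  ext
  simp [two_mul]

lemma centralMoment_id_four_gaussianReal (v : ℝ≥0) :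
    centralMoment id 4 (gaussianReal 0 v) = 3 * (v : ℝ) ^ 2 := by
  set μ := gaussianReal 0 v
  have hfst : HasLaw (fun ω : ℝ × ℝ ↦ ω.1) μ (μ.prod μ) := ⟨by fun_prop, by simp⟩
  have hsnd : HasLaw (fun ω : ℝ × ℝ ↦ ω.2) μ (μ.prod μ) := ⟨by fun_prop, by simp⟩
  have hindep : IndepFun (fun ω : ℝ × ℝ ↦ ω.1) (fun ω ↦ ω.2) (μ.prod μ) :=
    indepFun_prod measurable_id measurable_id
  have hsum : HasLaw ((fun ω : ℝ × ℝ ↦ ω.1) + (fun ω ↦ ω.2)) (gaussianReal 0 (v + v))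
      (μ.prod μ) := by
    simpa only [μ, gaussianReal_conv_gaussianReal, add_zero] using hindep.hasLaw_add hfst hsnd
  have hdouble : centralMoment id 4 (gaussianReal 0 (v + v)) =
      2 * centralMoment id 4 μ + 6 * (v : ℝ) ^ 2 := by
    rw [← hsum.centralMoment_eq, hindep.centralMoment_four_add
      (hfst.hasGaussianLaw.memLp (by norm_num)) (hsnd.hasGaussianLaw.memLp (by norm_num)),
      hfst.centralMoment_eq, hsnd.centralMoment_eq, hfst.variance_eq, hsnd.variance_eq,
      variance_id_gaussianReal]
    ring
  have hscale : centralMoment id 4 (gaussianReal 0 (v + v)) = 4 * centralMoment id 4 μ := by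
    rw [gaussianReal_add_self_eq_map_sqrt_two_mul, centralMoment_id_map (by fun_prop),
      centralMoment_const_mul]
    have hsqrt : √2 ^ 4 = 4 := by rw [show 4 = 2 * 2 by rfl, pow_mul]; norm_num
    rw [hsqrt]
    rfl
  linarith

section Kurtosis

variable {Ω : Type*} [MeasurableSpace Ω] {P : Measure Ω} {X Y : Ω → ℝ}

noncomputable def fourthCumulant (X : Ω → ℝ) (P : Measure Ω) : ℝ :=
  centralMoment X 4 P - 3 * variance X P ^ 2

lemma kurtRV_eq_fourthCumulant_div (hX : variance X P ≠ 0) :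
    kurtRV X P = fourthCumulant X P / variance X P ^ 2 := by
  rw [kurtRV, fourthCumulant]
  field_simp

lemma ProbabilityTheory.IndepFun.fourthCumulant_add [IsProbabilityMeasure P]
    (hX : MemLp X 4 P) (hY : MemLp Y 4 P) (hXY : IndepFun X Y P) :
    fourthCumulant (X + Y) P = fourthCumulant X P + fourthCumulant Y P := by
  rw [fourthCumulant, fourthCumulant, fourthCumulant, hXY.centralMoment_four_add hX hY,
    hXY.variance_add (hX.mono_exponent (by norm_num)) (hY.mono_exponent (by norm_num))]
  ring

lemma ProbabilityTheory.HasLaw.fourthCumulant_eq_zero {v : ℝ≥0}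
    (hX : HasLaw X (gaussianReal 0 v) P) : fourthCumulant X P = 0 := by
  rw [fourthCumulant, hX.centralMoment_eq, centralMoment_id_four_gaussianReal, hX.variance_eq,
    variance_id_gaussianReal]
  ring

lemma kurtRV_add_of_hasLaw_gaussianReal [IsProbabilityMeasure P] {v : ℝ≥0}
    (hX : MemLp X 4 P) (hvar : variance X P ≠ 0) (hY : HasLaw Y (gaussianReal 0 v) P)
    (hXY : IndepFun X Y P) :
    kurtRV (X + Y) P = kurtRV X P * (variance X P / (variance X P + v)) ^ 2 := by
  have hY4 : MemLp Y 4 P := hY.hasGaussianLaw.memLp (by norm_num)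
  have hsum : variance (X + Y) P = variance X P + v := by
    rw [hXY.variance_add (hX.mono_exponent (by norm_num)) (hY4.mono_exponent (by norm_num)),
      hY.variance_eq, variance_id_gaussianReal]
  have hpos : variance X P + v ≠ 0 := by
    have := variance_nonneg X P
    positivity
  rw [kurtRV_eq_fourthCumulant_div hvar, kurtRV_eq_fourthCumulant_div (hsum ▸ hpos), hsum,
    hXY.fourthCumulant_add hX hY4, hY.fourthCumulant_eq_zero]
  field_simp
  ring

end Kurtosis

lemma sq_div_add_lt_sq_div_add {v a b : ℝ} (hv : 0 < v) (ha : 0 ≤ a) (hab : a < b) :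
    (v / (v + b)) ^ 2 < (v / (v + a)) ^ 2 :=
  pow_lt_pow_left₀ (div_lt_div_of_pos_left hv (by linarith) (by linarith))
    (div_pos hv (by linarith)).le two_ne_zero

lemma sq_one_sub_one_div_lt {r₁ r₂ : ℝ} (hr₁ : 1 ≤ r₁) (hr : r₁ < r₂) :
    (1 - 1 / r₁) ^ 2 < (1 - 1 / r₂) ^ 2 := by
  have hr₁' : 0 < r₁ := one_pos.trans_le hr₁
  refine pow_lt_pow_left₀ ?_ ?_ two_ne_zero
  · linarith [one_div_lt_one_div_of_lt hr₁' hr]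
  · linarith [(div_le_one hr₁').mpr hr₁]

/-- Proposition 1 (monotonicity form): if `X` has finite fourth moment, positive variance
and strictly positive excess kurtosis, and `Y_σ = X + N_σ` with `N_σ` independent Gaussian
noise of law `N(0, σ²)`, then the excess kurtosis of the noisy observation is strictly
monotone in the noise level: for `0 < σ₁ < σ₂` one has
`0 < κ(Y_{σ₂}) < κ(Y_{σ₁}) < κ(X)`. Equivalently, `κ(X)·(1 − 1/r)²` is strictly
increasing in the signal-to-noise ratio `r ≥ 1`, so higher kurtosis of the noisy variable
corresponds to higher SNR. -/
theorem kurtosis_strictly_monotone_in_noise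
    {Ω : Type*} [MeasurableSpace Ω] (P : Measure Ω) [IsProbabilityMeasure P]
    (X : Ω → ℝ) (hX4 : MemLp X 4 P)
    (hvar : 0 < variance X P) (hkurt : 0 < kurtRV X P)
    (σ₁ σ₂ : ℝ) (hσ₁ : 0 < σ₁) (hσ₁₂ : σ₁ < σ₂)
    (N₁ N₂ : Ω → ℝ) (hN₁ : Measurable N₁) (hN₂ : Measurable N₂)
    (hmap₁ : P.map N₁ = (gaussianReal 0 (σ₁ ^ 2).toNNReal : Measure ℝ))
    (hmap₂ : P.map N₂ = (gaussianReal 0 (σ₂ ^ 2).toNNReal : Measure ℝ))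
    (hindep₁ : IndepFun X N₁ P) (hindep₂ : IndepFun X N₂ P) :
    (0 < kurtRV (X + N₂) P ∧
      kurtRV (X + N₂) P < kurtRV (X + N₁) P ∧
      kurtRV (X + N₁) P < kurtRV X P) ∧
    (∀ r₁ r₂ : ℝ, 1 ≤ r₁ → r₁ < r₂ →
      kurtRV X P * (1 - 1 / r₁) ^ 2 < kurtRV X P * (1 - 1 / r₂) ^ 2) := by
  have hkurt_noisy {σ : ℝ} {N : Ω → ℝ} (hN : Measurable N)
      (hmap : P.map N = gaussianReal 0 (σ ^ 2).toNNReal) (hindep : IndepFun X N P) :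
      kurtRV (X + N) P = kurtRV X P * (variance X P / (variance X P + σ ^ 2)) ^ 2 := by
    rw [kurtRV_add_of_hasLaw_gaussianReal hX4 hvar.ne' ⟨hN.aemeasurable, hmap⟩ hindep,
      Real.coe_toNNReal _ (sq_nonneg σ)]
  rw [hkurt_noisy hN₁ hmap₁ hindep₁, hkurt_noisy hN₂ hmap₂ hindep₂]
  refine ⟨⟨?_, ?_, ?_⟩, fun r₁ r₂ hr₁ hr ↦
    mul_lt_mul_of_pos_left (sq_one_sub_one_div_lt hr₁ hr) hkurt⟩
  · exact mul_pos hkurt (pow_pos (div_pos hvar (by positivity)) 2)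
  · exact mul_lt_mul_of_pos_left
      (sq_div_add_lt_sq_div_add hvar (sq_nonneg σ₁) (by gcongr)) hkurt
  · simpa [hvar.ne'] using mul_lt_mul_of_pos_left
      (sq_div_add_lt_sq_div_add hvar le_rfl (pow_pos hσ₁ 2)) hkurt
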